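/- arXiv:1306.6569 — 2 statements merged into one kernel-verified Lean document; each statement's English description precedes it below -/
import Mathlib

section
/- (Strict monotonicity of the gradient semiflow, equation (5)) Let T > 0 and let ξ, η : [0,T] → X_pq be solutions of the gradient flow with ξ(0) ≤ η(0) and ξ(0) ≠ η(0). Then ξ(t)_k < η(t)_k for every k ∈ ℤ and every t ∈ (0,T]. -/
open Set Real Function Filter Topology

/-- First partial derivative of the generating function. -/
noncomputable def pd1 (h : ℝ → ℝ → ℝ) (a b : ℝ) : ℝ := deriv (fun s => h s b) a

/-- Second partial derivative of the generating function. -/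
noncomputable def pd2 (h : ℝ → ℝ → ℝ) (a b : ℝ) : ℝ := deriv (fun s => h a s) b

/-- Mixed second partial derivative ∂₁∂₂h. -/
noncomputable def pd12 (h : ℝ → ℝ → ℝ) (a b : ℝ) : ℝ := deriv (fun s => pd2 h s b) a

/-- The space of (p,q)-configurations: x (n+q) = x n + p. -/
def IsConfig (p : ℤ) (q : ℕ) (x : ℤ → ℝ) : Prop := ∀ n : ℤ, x (n + (q : ℤ)) = x n + (p : ℝ)

/-- A solution of the gradient flow of the periodic action on a set I ⊆ ℝ. -/
def IsGradSol (h : ℝ → ℝ → ℝ) (p : ℤ) (q : ℕ) (I : Set ℝ) (ξ : ℝ → ℤ → ℝ) : Prop :=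
  (∀ t ∈ I, IsConfig p q (ξ t)) ∧
  ∀ k : ℤ, ∀ t ∈ I, HasDerivWithinAt (fun s => ξ s k)
    (-(pd2 h (ξ t (k - 1)) (ξ t k) + pd1 h (ξ t k) (ξ t (k + 1)))) I t

section AuxCalc
variable {h : ℝ → ℝ → ℝ} (hC2 : ContDiff ℝ 2 (Function.uncurry h))

lemma slice1_hasDerivAt {E : Type*} [NormedAddCommGroup E] [NormedSpace ℝ E]
    (g : ℝ × ℝ → E) (hg : Differentiable ℝ g) (a b : ℝ) :
    HasDerivAt (fun s => g (s, b)) (fderiv ℝ g (a, b) (1, 0)) a :=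
  (hg (a, b)).hasFDerivAt.comp_hasDerivAt a (HasDerivAt.prodMk (hasDerivAt_id a) (hasDerivAt_const a b))

lemma slice2_hasDerivAt {E : Type*} [NormedAddCommGroup E] [NormedSpace ℝ E]
    (g : ℝ × ℝ → E) (hg : Differentiable ℝ g) (a b : ℝ) :
    HasDerivAt (fun s => g (a, s)) (fderiv ℝ g (a, b) (0, 1)) b :=
  (hg (a, b)).hasFDerivAt.comp_hasDerivAt b (HasDerivAt.prodMk (hasDerivAt_const b a) (hasDerivAt_id b))

include hC2

lemma pd1_eq (a b : ℝ) : pd1 h a b = fderiv ℝ (uncurry h) (a, b) (1, 0) :=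
  (slice1_hasDerivAt _ (hC2.differentiable (by norm_num)) a b).deriv

lemma pd2_eq (a b : ℝ) : pd2 h a b = fderiv ℝ (uncurry h) (a, b) (0, 1) :=
  (slice2_hasDerivAt _ (hC2.differentiable (by norm_num)) a b).deriv

lemma fderiv_diff : Differentiable ℝ (fderiv ℝ (uncurry h)) :=
  (hC2.fderiv_right (m := 1) (by norm_num)).differentiable (by norm_num)

lemma pd2_fst_hasDerivAt (a b : ℝ) :
    HasDerivAt (fun s => pd2 h s b)
      (fderiv ℝ (fderiv ℝ (uncurry h)) (a, b) (1, 0) (0, 1)) a := by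
  have h1 : HasDerivAt (fun s => fderiv ℝ (uncurry h) (s, b))
      (fderiv ℝ (fderiv ℝ (uncurry h)) (a, b) (1, 0)) a :=
    slice1_hasDerivAt _ (fderiv_diff hC2) a b
  have h2 := h1.clm_apply (hasDerivAt_const a ((0 : ℝ), (1 : ℝ)))
  simp only [map_zero, add_zero] at h2
  exact h2.congr_of_eventuallyEq (by filter_upwards with s using pd2_eq hC2 s b)

lemma pd2_snd_hasDerivAt (a b : ℝ) :
    HasDerivAt (fun s => pd2 h a s)
      (fderiv ℝ (fderiv ℝ (uncurry h)) (a, b) (0, 1) (0, 1)) b := by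
  have h1 : HasDerivAt (fun s => fderiv ℝ (uncurry h) (a, s))
      (fderiv ℝ (fderiv ℝ (uncurry h)) (a, b) (0, 1)) b :=
    slice2_hasDerivAt _ (fderiv_diff hC2) a b
  have h2 := h1.clm_apply (hasDerivAt_const b ((0 : ℝ), (1 : ℝ)))
  simp only [map_zero, add_zero] at h2
  exact h2.congr_of_eventuallyEq (by filter_upwards with s using pd2_eq hC2 a s)

lemma pd1_fst_hasDerivAt (a b : ℝ) :
    HasDerivAt (fun s => pd1 h s b)
      (fderiv ℝ (fderiv ℝ (uncurry h)) (a, b) (1, 0) (1, 0)) a := by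
  have h1 : HasDerivAt (fun s => fderiv ℝ (uncurry h) (s, b))
      (fderiv ℝ (fderiv ℝ (uncurry h)) (a, b) (1, 0)) a :=
    slice1_hasDerivAt _ (fderiv_diff hC2) a b
  have h2 := h1.clm_apply (hasDerivAt_const a ((1 : ℝ), (0 : ℝ)))
  simp only [map_zero, add_zero] at h2
  exact h2.congr_of_eventuallyEq (by filter_upwards with s using pd1_eq hC2 s b)

lemma pd1_snd_hasDerivAt (a b : ℝ) :
    HasDerivAt (fun s => pd1 h a s)
      (fderiv ℝ (fderiv ℝ (uncurry h)) (a, b) (0, 1) (1, 0)) b := by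
  have h1 : HasDerivAt (fun s => fderiv ℝ (uncurry h) (a, s))
      (fderiv ℝ (fderiv ℝ (uncurry h)) (a, b) (0, 1)) b :=
    slice2_hasDerivAt _ (fderiv_diff hC2) a b
  have h2 := h1.clm_apply (hasDerivAt_const b ((1 : ℝ), (0 : ℝ)))
  simp only [map_zero, add_zero] at h2
  exact h2.congr_of_eventuallyEq (by filter_upwards with s using pd1_eq hC2 a s)

lemma pd12_eq (a b : ℝ) :
    pd12 h a b = fderiv ℝ (fderiv ℝ (uncurry h)) (a, b) (1, 0) (0, 1) :=
  (pd2_fst_hasDerivAt hC2 a b).deriv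

lemma snd_symm (a b : ℝ) :
    fderiv ℝ (fderiv ℝ (uncurry h)) (a, b) (0, 1) (1, 0) = pd12 h a b := by
  rw [pd12_eq hC2 a b]
  exact second_derivative_symmetric
    (fun y => ((hC2.differentiable (by norm_num)) y).hasFDerivAt)
    ((fderiv_diff hC2 (a, b)).hasFDerivAt) _ _

omit hC2

lemma snd_bd {C : ℝ} (hbd : ∀ v, ‖iteratedFDeriv ℝ 2 (uncurry h) v‖ ≤ C)
    (x v w : ℝ × ℝ) :
    |fderiv ℝ (fderiv ℝ (uncurry h)) x v w| ≤ C * (‖v‖ * ‖w‖) := by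
  have h1 := iteratedFDeriv_two_apply (𝕜 := ℝ) (uncurry h) x ![v, w]
  have h2 := (iteratedFDeriv ℝ 2 (uncurry h) x).le_opNorm ![v, w]
  simp only [Fin.prod_univ_two, Matrix.cons_val_zero, Matrix.cons_val_one,
    Matrix.head_cons, h1, Real.norm_eq_abs] at h2
  exact h2.trans (by
    have := hbd x
    have hn : (0:ℝ) ≤ ‖v‖ * ‖w‖ := by positivity
    nlinarith [norm_nonneg (iteratedFDeriv ℝ 2 (uncurry h) x)])

lemma norm_e1 : ‖((1:ℝ), (0:ℝ))‖ = 1 := by simp [Prod.norm_def]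
lemma norm_e2 : ‖((0:ℝ), (1:ℝ))‖ = 1 := by simp [Prod.norm_def]

include hC2

lemma pd2_strictAnti_fst (htwist : ∀ a b : ℝ, pd12 h a b < 0) (v : ℝ) :
    StrictAnti (fun s => pd2 h s v) :=
  strictAnti_of_deriv_neg fun x => by
    rw [(pd2_fst_hasDerivAt hC2 x v).deriv, ← pd12_eq hC2]; exact htwist x v

lemma pd1_strictAnti_snd (htwist : ∀ a b : ℝ, pd12 h a b < 0) (u : ℝ) :
    StrictAnti (fun s => pd1 h u s) :=
  strictAnti_of_deriv_neg fun x => by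
    rw [(pd1_snd_hasDerivAt hC2 u x).deriv, snd_symm hC2]; exact htwist u x

variable {C : ℝ} (hbd : ∀ v, ‖iteratedFDeriv ℝ 2 (uncurry h) v‖ ≤ C)
include hbd

lemma pd2_lip_snd (a x y : ℝ) : |pd2 h a y - pd2 h a x| ≤ C * |y - x| := by
  have := Convex.norm_image_sub_le_of_norm_hasDerivWithin_le
    (f := fun s => pd2 h a s)
    (f' := fun s => fderiv ℝ (fderiv ℝ (uncurry h)) (a, s) (0, 1) (0, 1))
    (s := univ)
    (fun z _ => (pd2_snd_hasDerivAt hC2 a z).hasDerivWithinAt)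
    (fun z _ => by
      have := snd_bd hbd (a, z) (0, 1) (0, 1)
      rw [norm_e2, one_mul, mul_one] at this
      simpa [Real.norm_eq_abs] using this)
    convex_univ (mem_univ x) (mem_univ y)
  simpa [Real.norm_eq_abs] using this

lemma pd1_lip_fst (v x y : ℝ) : |pd1 h y v - pd1 h x v| ≤ C * |y - x| := by
  have := Convex.norm_image_sub_le_of_norm_hasDerivWithin_le
    (f := fun s => pd1 h s v)
    (f' := fun s => fderiv ℝ (fderiv ℝ (uncurry h)) (s, v) (1, 0) (1, 0))
    (s := univ)
    (fun z _ => (pd1_fst_hasDerivAt hC2 z v).hasDerivWithinAt)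
    (fun z _ => by
      have := snd_bd hbd (z, v) (1, 0) (1, 0)
      rw [norm_e1, one_mul, mul_one] at this
      simpa [Real.norm_eq_abs] using this)
    convex_univ (mem_univ x) (mem_univ y)
  simpa [Real.norm_eq_abs] using this

lemma pd2_lip_fst (v x y : ℝ) : |pd2 h y v - pd2 h x v| ≤ C * |y - x| := by
  have := Convex.norm_image_sub_le_of_norm_hasDerivWithin_le
    (f := fun s => pd2 h s v)
    (f' := fun s => fderiv ℝ (fderiv ℝ (uncurry h)) (s, v) (1, 0) (0, 1))
    (s := univ)
    (fun z _ => (pd2_fst_hasDerivAt hC2 z v).hasDerivWithinAt)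
    (fun z _ => by
      have := snd_bd hbd (z, v) (1, 0) (0, 1)
      rw [norm_e1, norm_e2, one_mul, mul_one] at this
      simpa [Real.norm_eq_abs] using this)
    convex_univ (mem_univ x) (mem_univ y)
  simpa [Real.norm_eq_abs] using this

lemma pd1_lip_snd (u x y : ℝ) : |pd1 h u y - pd1 h u x| ≤ C * |y - x| := by
  have := Convex.norm_image_sub_le_of_norm_hasDerivWithin_le
    (f := fun s => pd1 h u s)
    (f' := fun s => fderiv ℝ (fderiv ℝ (uncurry h)) (u, s) (0, 1) (1, 0))
    (s := univ)
    (fun z _ => (pd1_snd_hasDerivAt hC2 u z).hasDerivWithinAt)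
    (fun z _ => by
      have := snd_bd hbd (u, z) (0, 1) (1, 0)
      rw [norm_e1, norm_e2, one_mul, mul_one] at this
      simpa [Real.norm_eq_abs] using this)
    convex_univ (mem_univ x) (mem_univ y)
  simpa [Real.norm_eq_abs] using this

variable (htwist : ∀ a b : ℝ, pd12 h a b < 0)
include htwist

lemma Dmono {am a ap bm b bp : ℝ} (h1 : am ≤ bm) (h2 : a ≤ b) (h3 : ap ≤ bp) :
    0 ≤ -(pd2 h bm b + pd1 h b bp) + (pd2 h am a + pd1 h a ap) + 2 * C * (b - a) := by
  have e1 : pd2 h bm b ≤ pd2 h am b := (pd2_strictAnti_fst hC2 htwist b).antitone h1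
  have e2 : pd2 h am b - pd2 h am a ≤ C * (b - a) := by
    have h' := (le_abs_self _).trans (pd2_lip_snd hC2 hbd am a b)
    rwa [abs_of_nonneg (by linarith : (0:ℝ) ≤ b - a)] at h'
  have e3 : pd1 h b bp ≤ pd1 h b ap := (pd1_strictAnti_snd hC2 htwist b).antitone h3
  have e4 : pd1 h b ap - pd1 h a ap ≤ C * (b - a) := by
    have h' := (le_abs_self _).trans (pd1_lip_fst hC2 hbd ap a b)
    rwa [abs_of_nonneg (by linarith : (0:ℝ) ≤ b - a)] at h'
  linarith

lemma Dstrict {am a ap bm b bp : ℝ} (h1 : am ≤ bm) (h2 : a ≤ b) (h3 : ap ≤ bp)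
    (h4 : am < bm ∨ ap < bp) :
    0 < -(pd2 h bm b + pd1 h b bp) + (pd2 h am a + pd1 h a ap) + 2 * C * (b - a) := by
  have e2 : pd2 h am b - pd2 h am a ≤ C * (b - a) := by
    have h' := (le_abs_self _).trans (pd2_lip_snd hC2 hbd am a b)
    rwa [abs_of_nonneg (by linarith : (0:ℝ) ≤ b - a)] at h'
  have e4 : pd1 h b ap - pd1 h a ap ≤ C * (b - a) := by
    have h' := (le_abs_self _).trans (pd1_lip_fst hC2 hbd ap a b)
    rwa [abs_of_nonneg (by linarith : (0:ℝ) ≤ b - a)] at h'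
  rcases h4 with h4 | h4
  · have e1 : pd2 h bm b < pd2 h am b := (pd2_strictAnti_fst hC2 htwist b) h4
    have e3 : pd1 h b bp ≤ pd1 h b ap := (pd1_strictAnti_snd hC2 htwist b).antitone h3
    linarith
  · have e1 : pd2 h bm b ≤ pd2 h am b := (pd2_strictAnti_fst hC2 htwist b).antitone h1
    have e3 : pd1 h b bp < pd1 h b ap := (pd1_strictAnti_snd hC2 htwist b) h4
    linarith

lemma Dlower (hC : 0 ≤ C) {am a ap bm b bp : ℝ} :
    -(C * max (am - bm) 0 + 2 * C * |b - a| + C * max (ap - bp) 0)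
      ≤ -(pd2 h bm b + pd1 h b bp) + (pd2 h am a + pd1 h a ap) := by
  have e2 : pd2 h am b - pd2 h am a ≤ C * |b - a| :=
    (le_abs_self _).trans (pd2_lip_snd hC2 hbd am a b)
  have e4 : pd1 h b ap - pd1 h a ap ≤ C * |b - a| :=
    (le_abs_self _).trans (pd1_lip_fst hC2 hbd ap a b)
  have e1 : pd2 h bm b - pd2 h am b ≤ C * max (am - bm) 0 := by
    rcases le_total am bm with hc | hc
    · have h5 : pd2 h bm b ≤ pd2 h am b := (pd2_strictAnti_fst hC2 htwist b).antitone hc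
      have h6 : pd2 h bm b - pd2 h am b ≤ 0 := by linarith
      exact h6.trans (by positivity)
    · have h' := (le_abs_self _).trans (pd2_lip_fst hC2 hbd b am bm)
      rw [abs_of_nonpos (by linarith : bm - am ≤ 0)] at h'
      rw [max_eq_left (by linarith : (0:ℝ) ≤ am - bm)]
      linarith
  have e3 : pd1 h b bp - pd1 h b ap ≤ C * max (ap - bp) 0 := by
    rcases le_total ap bp with hc | hc
    · have h5 : pd1 h b bp ≤ pd1 h b ap := (pd1_strictAnti_snd hC2 htwist b).antitone hc
      have h6 : pd1 h b bp - pd1 h b ap ≤ 0 := by linarith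
      exact h6.trans (by positivity)
    · have h' := (le_abs_self _).trans (pd1_lip_snd hC2 hbd b ap bp)
      rw [abs_of_nonpos (by linarith : bp - ap ≤ 0)] at h'
      rw [max_eq_left (by linarith : (0:ℝ) ≤ ap - bp)]
      linarith
  linarith

end AuxCalc

section AuxFlow

lemma IsConfig.add_mul {p : ℤ} {q : ℕ} {x : ℤ → ℝ} (hx : IsConfig p q x) (m n : ℤ) :
    x (n + m * q) = x n + (m : ℝ) * (p : ℝ) := by
  induction m using Int.induction_on with
  | zero => simp
  | succ i ih =>
      have h1 := hx (n + i * q)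
      rw [show n + ((i:ℤ) + 1) * q = n + i * q + q by ring, h1, ih]
      push_cast; ring
  | pred i ih =>
      have h1 := hx (n + (-(i:ℤ) - 1) * q)
      rw [show n + (-(i:ℤ) - 1) * q + q = n + (-(i:ℤ)) * q by ring] at h1
      have h2 : x (n + (-(i:ℤ) - 1) * q) = x (n + (-(i:ℤ)) * q) - p := by linarith
      rw [h2, ih]; push_cast; ring

lemma IsConfig.reduce {p : ℤ} {q : ℕ} {x : ℤ → ℝ} (hx : IsConfig p q x) (k : ℤ) :
    x k = x (k % (q:ℤ)) + ((k / (q:ℤ) : ℤ) : ℝ) * (p : ℝ) := by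
  have := hx.add_mul (k / (q:ℤ)) (k % (q:ℤ))
  rwa [Int.emod_add_ediv_mul k (q:ℤ)] at this

lemma deriv_nonpos_of_left {f : ℝ → ℝ} {d t0 T : ℝ} (h0 : 0 < t0) (hT : t0 ≤ T)
    (hf : HasDerivWithinAt f d (Icc 0 T) t0) (hpos : ∀ t ∈ Ico 0 t0, f t0 < f t) :
    d ≤ 0 := by
  rw [hasDerivWithinAt_iff_tendsto_slope] at hf
  have hsub : Ico (0:ℝ) t0 ⊆ Icc 0 T \ {t0} :=
    fun t ht => ⟨⟨ht.1, ht.2.le.trans hT⟩, ne_of_lt ht.2⟩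
  have hne : (𝓝[Ico (0:ℝ) t0] t0).NeBot := by
    apply mem_closure_iff_nhdsWithin_neBot.mp
    rw [closure_Ico (by linarith : (0:ℝ) ≠ t0)]
    exact right_mem_Icc.mpr h0.le
  have htd := hf.mono_left (nhdsWithin_mono t0 hsub)
  refine le_of_tendsto htd ?_
  filter_upwards [self_mem_nhdsWithin] with t ht
  rw [slope_def_field]
  have h1 : f t0 < f t := hpos t ht
  have h2 : t - t0 < 0 := by have := ht.2; simpa [sub_neg] using this
  exact div_nonpos_of_nonneg_of_nonpos (by linarith) (by linarith)

lemma weighted_mono {f d : ℝ → ℝ} {c T : ℝ}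
    (hf : ∀ t ∈ Icc (0:ℝ) T, HasDerivWithinAt f (d t) (Icc 0 T) t)
    (hge : ∀ t ∈ Ioo (0:ℝ) T, 0 ≤ c * f t + d t) :
    MonotoneOn (fun t => exp (c * t) * f t) (Icc 0 T) := by
  have hD : ∀ x ∈ Ioo (0:ℝ) T, HasDerivAt (fun t => exp (c * t) * f t)
      (c * exp (c * x) * f x + exp (c * x) * d x) x := by
    intro x hx
    have h1 : HasDerivAt f (d x) x :=
      (hf x (Ioo_subset_Icc_self hx)).hasDerivAt (Icc_mem_nhds hx.1 hx.2)
    have h2 : HasDerivAt (fun t => exp (c * t)) (exp (c * x) * (c * 1)) x :=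
      ((hasDerivAt_id x).const_mul c).exp
    have h3 := h2.mul h1
    rw [show c * exp (c * x) * f x + exp (c * x) * d x = exp (c * x) * (c * 1) * f x + exp (c * x) * d x by ring]; exact h3
  apply monotoneOn_of_deriv_nonneg (convex_Icc 0 T)
  · exact (Continuous.continuousOn (by continuity)).mul (fun t ht => (hf t ht).continuousWithinAt)
  · rw [interior_Icc]; exact fun x hx => (hD x hx).differentiableAt.differentiableWithinAt
  · rw [interior_Icc]; intro x hx
    rw [(hD x hx).deriv]
    nlinarith [hge x hx, exp_pos (c * x)]

lemma weighted_strict {f d : ℝ → ℝ} {c T u v : ℝ} (hu : 0 ≤ u) (hvT : v ≤ T)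
    (hf : ∀ t ∈ Icc (0:ℝ) T, HasDerivWithinAt f (d t) (Icc 0 T) t)
    (hgt : ∀ t ∈ Ioo u v, 0 < c * f t + d t) :
    StrictMonoOn (fun t => exp (c * t) * f t) (Icc u v) := by
  have hD : ∀ x ∈ Ioo u v, HasDerivAt (fun t => exp (c * t) * f t)
      (c * exp (c * x) * f x + exp (c * x) * d x) x := by
    intro x hx
    have hx' : x ∈ Ioo (0:ℝ) T := ⟨lt_of_le_of_lt hu hx.1, lt_of_lt_of_le hx.2 hvT⟩
    have h1 : HasDerivAt f (d x) x :=
      (hf x (Ioo_subset_Icc_self hx')).hasDerivAt (Icc_mem_nhds hx'.1 hx'.2)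
    have h2 : HasDerivAt (fun t => exp (c * t)) (exp (c * x) * (c * 1)) x :=
      ((hasDerivAt_id x).const_mul c).exp
    have h3 := h2.mul h1
    rw [show c * exp (c * x) * f x + exp (c * x) * d x = exp (c * x) * (c * 1) * f x + exp (c * x) * d x by ring]; exact h3
  apply strictMonoOn_of_deriv_pos (convex_Icc u v)
  · apply ContinuousOn.mono
      ((Continuous.continuousOn (by continuity : Continuous fun t : ℝ => exp (c*t))).mul
        (fun t ht => (hf t ht).continuousWithinAt))
    exact Icc_subset_Icc hu hvT
  · rw [interior_Icc]; intro x hx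
    rw [(hD x hx).deriv]
    nlinarith [hgt x hx, exp_pos (c * x)]

end AuxFlow

set_option maxHeartbeats 2000000 in
/-- Strict monotonicity of the gradient semiflow (equation (5)):
if ξ(0) ≤ η(0) and ξ(0) ≠ η(0), then ξ(t) ≺ η(t) for all t ∈ (0,T]. -/
theorem gradient_semiflow_strictly_monotone
    (p : ℤ) (q : ℕ) (hq : 0 < q) (hpq : IsCoprime p (q : ℤ))
    (h : ℝ → ℝ → ℝ) (hC2 : ContDiff ℝ 2 (Function.uncurry h))
    (htwist : ∀ a b : ℝ, pd12 h a b < 0)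
    (hper : ∀ a b : ℝ, h (a + 1) (b + 1) = h a b)
    (hbd : ∃ C : ℝ, ∀ v : ℝ × ℝ, ‖iteratedFDeriv ℝ 2 (Function.uncurry h) v‖ ≤ C)
    (T : ℝ) (hT : 0 < T) (ξ η : ℝ → ℤ → ℝ)
    (hξ : IsGradSol h p q (Set.Icc 0 T) ξ) (hη : IsGradSol h p q (Set.Icc 0 T) η)
    (hle : ∀ k : ℤ, ξ 0 k ≤ η 0 k) (hne : ξ 0 ≠ η 0) :
    ∀ k : ℤ, ∀ t ∈ Set.Ioc (0 : ℝ) T, ξ t k < η t k := by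
  classical
  obtain ⟨C0, hC0⟩ := hbd
  obtain ⟨C, hCdef⟩ : ∃ c : ℝ, c = max C0 0 := ⟨_, rfl⟩
  have hC : 0 ≤ C := by rw [hCdef]; exact le_max_right _ _
  have hCb : ∀ v, ‖iteratedFDeriv ℝ 2 (Function.uncurry h) v‖ ≤ C :=
    fun v => (hC0 v).trans (by rw [hCdef]; exact le_max_left _ _)
  obtain ⟨hξc, hξd⟩ := hξ
  obtain ⟨hηc, hηd⟩ := hη
  obtain ⟨δ, hδdef⟩ : ∃ f : ℤ → ℝ → ℝ, f = fun k t => η t k - ξ t k := ⟨_, rfl⟩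
  obtain ⟨D, hDdef⟩ : ∃ f : ℤ → ℝ → ℝ, f = fun k t =>
    -(pd2 h (η t (k-1)) (η t k) + pd1 h (η t k) (η t (k+1)))
      - (-(pd2 h (ξ t (k-1)) (ξ t k) + pd1 h (ξ t k) (ξ t (k+1)))) := ⟨_, rfl⟩
  have h0T : (0:ℝ) ∈ Icc (0:ℝ) T := left_mem_Icc.mpr hT.le
  have hδd : ∀ (k : ℤ), ∀ t ∈ Icc (0:ℝ) T, HasDerivWithinAt (δ k) (D k t) (Icc 0 T) t := by
    intro k t ht
    simp only [hδdef, hDdef]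
    exact (hηd k t ht).sub (hξd k t ht)
  have hδc : ∀ k : ℤ, ContinuousOn (δ k) (Icc 0 T) :=
    fun k t ht => (hδd k t ht).continuousWithinAt
  have hmod : ∀ k : ℤ, ∃ j : ℕ, j < q ∧ (j:ℤ) = k % (q:ℤ) := by
    intro k
    have e1 : 0 ≤ k % (q:ℤ) := Int.emod_nonneg _ (by exact_mod_cast hq.ne')
    have e2 : k % (q:ℤ) < (q:ℤ) := Int.emod_lt_of_pos _ (by exact_mod_cast hq)
    exact ⟨(k % (q:ℤ)).toNat, by omega, by omega⟩
  have hper' : ∀ (k : ℤ), ∀ t ∈ Icc (0:ℝ) T, δ k t = δ (k % (q:ℤ)) t := by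
    intro k t ht
    have h1 := (hηc t ht).reduce k
    have h2 := (hξc t ht).reduce k
    simp only [hδdef]
    rw [h1, h2]; ring
  obtain ⟨L, hLdef⟩ : ∃ l : ℝ, l = 4 * C + 1 := ⟨_, rfl⟩
  have hL0 : 0 < L := by rw [hLdef]; linarith
  -- Step 1: ε-approximate comparison principle
  have key1 : ∀ ε : ℝ, 0 < ε → ∀ t ∈ Icc (0:ℝ) T, ∀ k : ℤ, -(ε * exp (L * t)) ≤ δ k t := by
    intro ε hε
    by_contra hcon
    push_neg at hcon
    obtain ⟨t1, ht1, k1, hk1⟩ := hcon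
    obtain ⟨w, hwdef⟩ : ∃ f : ℤ → ℝ → ℝ, f = fun k t => δ k t + ε * exp (L * t) := ⟨_, rfl⟩
    have hwper : ∀ (k : ℤ), ∀ t ∈ Icc (0:ℝ) T, w k t = w (k % (q:ℤ)) t := by
      intro k t ht; simp only [hwdef]; rw [hper' k t ht]
    have hwcont : ∀ k : ℤ, ContinuousOn (w k) (Icc 0 T) := by
      intro k
      simp only [hwdef]
      exact (hδc k).add (Continuous.continuousOn (by continuity))
    obtain ⟨S, hSdef⟩ : ∃ s : Set ℝ, s = ⋃ j ∈ ((Finset.range q : Finset ℕ) : Set ℕ),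
      (Icc 0 T ∩ (w (j:ℤ)) ⁻¹' (Iic 0)) := ⟨_, rfl⟩
    have hmemS : ∀ t : ℝ, t ∈ S ↔ ∃ j : ℕ, j < q ∧ t ∈ Icc (0:ℝ) T ∧ w (j:ℤ) t ≤ 0 := by
      intro t
      simp only [hSdef, mem_iUnion, Finset.mem_coe, Finset.mem_range, mem_inter_iff,
        mem_preimage, mem_Iic, exists_prop]
    have hScl : IsClosed S := by
      rw [hSdef]
      apply Set.Finite.isClosed_biUnion (Finset.range q).finite_toSet
      intro j _
      exact (hwcont j).preimage_isClosed_of_isClosed isClosed_Icc isClosed_Iic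
    have hSne : S.Nonempty := by
      obtain ⟨j, hjq, hje⟩ := hmod k1
      refine ⟨t1, (hmemS t1).mpr ⟨j, hjq, ht1, ?_⟩⟩
      rw [hje, ← hwper k1 t1 ht1]
      simp only [hwdef]
      linarith
    have hbdd : BddBelow S := ⟨0, fun t ht => ((hmemS t).mp ht).choose_spec.2.1.1⟩
    obtain ⟨ts, htsdef⟩ : ∃ x : ℝ, x = sInf S := ⟨_, rfl⟩
    have htsS : ts ∈ S := by rw [htsdef]; exact hScl.csInf_mem hSne hbdd
    obtain ⟨j0n, hj0q, htsIcc, hj0⟩ := (hmemS ts).mp htsS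
    obtain ⟨j0, hj0def⟩ : ∃ j : ℤ, j = (j0n : ℤ) := ⟨_, rfl⟩
    rw [← hj0def] at hj0
    have hts_pos : 0 < ts := by
      rcases htsIcc.1.eq_or_lt with he | hl
      · exfalso
        have : w j0 0 ≤ 0 := by rw [← he] at hj0; exact hj0
        simp only [hwdef, mul_zero, exp_zero, mul_one] at this
        have hδ0 : 0 ≤ δ j0 0 := by simp only [hδdef]; linarith [hle j0]
        linarith
      · exact hl
    have hbefore : ∀ t ∈ Ico (0:ℝ) ts, ∀ k : ℤ, 0 < w k t := by
      intro t ht k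
      have htIcc : t ∈ Icc (0:ℝ) T := ⟨ht.1, ht.2.le.trans htsIcc.2⟩
      have hnotS : t ∉ S := by
        intro hmem
        have h6 : sInf S ≤ t := csInf_le hbdd hmem
        rw [← htsdef] at h6
        exact absurd h6 (not_le.mpr ht.2)
      rw [hwper k t htIcc]
      obtain ⟨j, hjq, hje⟩ := hmod k
      rw [← hje]
      by_contra hle'
      push_neg at hle'
      exact hnotS ((hmemS t).mpr ⟨j, hjq, htIcc, hle'⟩)
    have hatstar : ∀ k : ℤ, 0 ≤ w k ts := by
      intro k
      by_contra hneg
      push_neg at hneg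
      obtain ⟨j, hjq, hje⟩ := hmod k
      have hneg' : w (j:ℤ) ts < 0 := by rw [hje, ← hwper k ts htsIcc]; exact hneg
      have hc : ContinuousWithinAt (w (j:ℤ)) (Icc 0 T) ts := hwcont (j:ℤ) ts htsIcc
      have hev : (w (j:ℤ)) ⁻¹' (Iio 0) ∈ 𝓝[Icc (0:ℝ) T] ts := hc (Iio_mem_nhds hneg')
      have hmono2 : 𝓝[Ico (0:ℝ) ts] ts ≤ 𝓝[Icc (0:ℝ) T] ts :=
        nhdsWithin_mono _ (fun t ht => ⟨ht.1, ht.2.le.trans htsIcc.2⟩)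
      have hne2 : (𝓝[Ico (0:ℝ) ts] ts).NeBot := by
        apply mem_closure_iff_nhdsWithin_neBot.mp
        rw [closure_Ico (by linarith : (0:ℝ) ≠ ts)]
        exact right_mem_Icc.mpr hts_pos.le
      have hev2 : ∀ᶠ t in 𝓝[Ico (0:ℝ) ts] ts, w (j:ℤ) t < 0 := hmono2 hev
      obtain ⟨t, htlt, htmem⟩ := (hev2.and self_mem_nhdsWithin).exists
      linarith [hbefore t htmem (j:ℤ)]
    have hw0 : w j0 ts = 0 := le_antisymm hj0 (hatstar j0)
    have hder : HasDerivWithinAt (w j0) (D j0 ts + ε * (exp (L * ts) * (L * 1)))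
        (Icc 0 T) ts := by
      simp only [hwdef]
      exact (hδd j0 ts htsIcc).add
        ((((hasDerivAt_id ts).const_mul L).exp.const_mul ε).hasDerivWithinAt)
    have hE0 : 0 < exp (L * ts) := exp_pos _
    have hb1 : max (ξ ts (j0-1) - η ts (j0-1)) 0 ≤ ε * exp (L * ts) := by
      have h5 := hatstar (j0-1)
      simp only [hwdef, hδdef] at h5
      apply max_le
      · linarith
      · positivity
    have hb3 : max (ξ ts (j0+1) - η ts (j0+1)) 0 ≤ ε * exp (L * ts) := by
      have h5 := hatstar (j0+1)
      simp only [hwdef, hδdef] at h5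
      apply max_le
      · linarith
      · positivity
    have hb2 : |η ts j0 - ξ ts j0| ≤ ε * exp (L * ts) := by
      have h5 : δ j0 ts = -(ε * exp (L * ts)) := by
        simp only [hwdef] at hw0; linarith
      simp only [hδdef] at h5
      rw [h5, abs_neg, abs_of_nonneg (by positivity)]
    have hDl := Dlower hC2 hCb htwist hC (am := ξ ts (j0-1)) (a := ξ ts j0)
      (ap := ξ ts (j0+1)) (bm := η ts (j0-1)) (b := η ts j0) (bp := η ts (j0+1))
    have hd_pos : 0 < D j0 ts + ε * (exp (L * ts) * (L * 1)) := by
      have m1 : C * max (ξ ts (j0-1) - η ts (j0-1)) 0 ≤ C * (ε * exp (L * ts)) :=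
        mul_le_mul_of_nonneg_left hb1 hC
      have m2 : 2 * C * |η ts j0 - ξ ts j0| ≤ 2 * C * (ε * exp (L * ts)) :=
        mul_le_mul_of_nonneg_left hb2 (by linarith)
      have m3 : C * max (ξ ts (j0+1) - η ts (j0+1)) 0 ≤ C * (ε * exp (L * ts)) :=
        mul_le_mul_of_nonneg_left hb3 hC
      have hLsub : ε * (exp (L * ts) * (L * 1)) = 4 * C * (ε * exp (L * ts)) +
          ε * exp (L * ts) := by
        simp only [hLdef]; ring
      simp only [hDdef]
      have hεE : 0 < ε * exp (L * ts) := by positivity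
      nlinarith [hDl]
    have hcontra : D j0 ts + ε * (exp (L * ts) * (L * 1)) ≤ 0 := by
      apply deriv_nonpos_of_left hts_pos htsIcc.2 hder
      intro t ht
      rw [hw0]
      exact hbefore t ht j0
    linarith
  -- Step 1 conclusion
  have step1 : ∀ t ∈ Icc (0:ℝ) T, ∀ k : ℤ, 0 ≤ δ k t := by
    intro t ht k
    by_contra hneg
    push_neg at hneg
    have hexp : exp (L * t) ≤ exp (L * T) :=
      exp_le_exp.mpr (mul_le_mul_of_nonneg_left ht.2 hL0.le)
    obtain ⟨ε, hε, hεe⟩ : ∃ ε : ℝ, 0 < ε ∧ ε * exp (L * T) = -δ k t / 2 :=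
      ⟨-δ k t / (2 * exp (L * T)),
        div_pos (by linarith) (by positivity),
        by field_simp⟩
    have hkey := key1 ε hε t ht k
    have h2 : ε * exp (L * t) ≤ ε * exp (L * T) :=
      mul_le_mul_of_nonneg_left hexp hε.le
    linarith
  have hle' : ∀ t ∈ Icc (0:ℝ) T, ∀ k : ℤ, ξ t k ≤ η t k := by
    intro t ht k
    have := step1 t ht k
    simp only [hδdef] at this
    linarith
  -- Step 2: monotonicity of weighted differences
  have hmono : ∀ k : ℤ, MonotoneOn (fun t => exp (2*C*t) * δ k t) (Icc 0 T) := by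
    intro k
    apply weighted_mono (hδd k)
    intro t ht
    have htI : t ∈ Icc (0:ℝ) T := Ioo_subset_Icc_self ht
    have hDm := Dmono hC2 hCb htwist (hle' t htI (k-1)) (hle' t htI k) (hle' t htI (k+1))
    simp only [hDdef, hδdef]
    linarith
  have hstrict : ∀ (k : ℤ) (u v : ℝ), 0 ≤ u → v ≤ T → u < v →
      (∀ t ∈ Icc u v, 0 < δ (k-1) t ∨ 0 < δ (k+1) t) → 0 < δ k v := by
    intro k u v hu hv huv hnb
    have hsm : StrictMonoOn (fun t => exp (2*C*t) * δ k t) (Icc u v) := by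
      apply weighted_strict hu hv (hδd k)
      intro t ht
      have htI : t ∈ Icc (0:ℝ) T := ⟨hu.trans ht.1.le, ht.2.le.trans hv⟩
      have h4 : ξ t (k-1) < η t (k-1) ∨ ξ t (k+1) < η t (k+1) := by
        rcases hnb t (Ioo_subset_Icc_self ht) with hx | hx
        · left; simp only [hδdef] at hx; linarith
        · right; simp only [hδdef] at hx; linarith
      have hDs := Dstrict hC2 hCb htwist (hle' t htI (k-1)) (hle' t htI k)
        (hle' t htI (k+1)) h4
      simp only [hDdef, hδdef]
      linarith
    have hlt := hsm (left_mem_Icc.mpr huv.le) (right_mem_Icc.mpr huv.le) huv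
    have hδu : 0 ≤ δ k u := step1 u ⟨hu, huv.le.trans hv⟩ k
    have e1 : (0:ℝ) < exp (2*C*u) := exp_pos _
    have e2 : (0:ℝ) < exp (2*C*v) := exp_pos _
    by_contra hnp
    push_neg at hnp
    have hx1 : (0:ℝ) ≤ exp (2*C*u) * δ k u := mul_nonneg e1.le hδu
    have hx2 : exp (2*C*v) * δ k v ≤ 0 := mul_nonpos_of_nonneg_of_nonpos e2.le hnp
    simp only at hlt
    linarith
  -- base point
  obtain ⟨k0, hk0⟩ : ∃ k0 : ℤ, 0 < δ k0 0 := by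
    obtain ⟨k0, hk0⟩ := Function.ne_iff.mp hne
    exact ⟨k0, by simp only [hδdef]; exact sub_pos.mpr (lt_of_le_of_ne (hle k0) hk0)⟩
  have pos0 : ∀ t ∈ Icc (0:ℝ) T, 0 < δ k0 t := by
    intro t ht
    have hlt := hmono k0 h0T ht ht.1
    simp only [mul_zero, exp_zero, one_mul] at hlt
    have e2 : (0:ℝ) < exp (2*C*t) := exp_pos _
    by_contra hnp
    push_neg at hnp
    have hx2 : exp (2*C*t) * δ k0 t ≤ 0 := mul_nonpos_of_nonneg_of_nonpos e2.le hnp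
    linarith
  -- propagation
  have main : ∀ n : ℕ, ∀ t ∈ Ioc (0:ℝ) T, 0 < δ (k0 + (n:ℤ)) t ∧ 0 < δ (k0 - (n:ℤ)) t := by
    intro n
    induction n with
    | zero =>
        intro t ht
        constructor <;> simpa using pos0 t (Ioc_subset_Icc_self ht)
    | succ n ih =>
        intro t ht
        have ht2 : 0 < t/2 := by linarith [ht.1]
        have hIoc : ∀ s, s ∈ Icc (t/2) t → s ∈ Ioc (0:ℝ) T :=
          fun s hs => ⟨lt_of_lt_of_le ht2 hs.1, hs.2.trans ht.2⟩
        constructor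
        · apply hstrict (k0 + ((n:ℤ)+1)) (t/2) t ht2.le ht.2 (by linarith)
          intro s hs
          left
          rw [show k0 + ((n:ℤ)+1) - 1 = k0 + (n:ℤ) by ring]
          exact (ih s (hIoc s hs)).1
        · apply hstrict (k0 - ((n:ℤ)+1)) (t/2) t ht2.le ht.2 (by linarith)
          intro s hs
          right
          rw [show k0 - ((n:ℤ)+1) + 1 = k0 - (n:ℤ) by ring]
          exact (ih s (hIoc s hs)).2
  intro k t ht
  obtain ⟨n, hn⟩ : ∃ n : ℕ, k = k0 + (n:ℤ) ∨ k = k0 - (n:ℤ) := ⟨(k - k0).natAbs, by omega⟩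
  have hmain := main n t ht
  rcases hn with hn | hn
  · have := hmain.1; rw [← hn] at this; simp only [hδdef] at this; linarith
  · have := hmain.2; rw [← hn] at this; simp only [hδdef] at this; linarith
end

section
/- (Corollary 2.1, comparability part) Let x, x' ∈ X_pq with x ≺ x', and assume that for every (i,j) ∈ ℤ² not of the form (mq, -mp) with m ∈ ℤ, either τ_{ij}x' ≤ x or x' ≤ τ_{ij}x. Then every z ∈ X_pq with x ≺ z ≺ x' is comparable with every translate of x and of x': for all i, j ∈ ℤ, (τ_{ij}x ≤ z or z ≤ τ_{ij}x) and (τ_{ij}x' ≤ z or z ≤ τ_{ij}x'). -/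
/-- The translation τ_{ij} : (τ_{ij}x)_k = x_{k+i} + j. -/
def tau (i j : ℤ) (x : ℤ → ℝ) : ℤ → ℝ := fun k => x (k + i) + (j : ℝ)

/-- Pointwise order on configurations. -/
def ConfLe (x y : ℤ → ℝ) : Prop := ∀ k : ℤ, x k ≤ y k

/-- Strict pointwise order on configurations. -/
def ConfLt (x y : ℤ → ℝ) : Prop := ∀ k : ℤ, x k < y k

lemma config_shift {p : ℤ} {q : ℕ} {x : ℤ → ℝ} (hx : IsConfig p q x) (m k : ℤ) :
    x (k + m * (q : ℤ)) = x k + ((m * p : ℤ) : ℝ) := by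
  induction m using Int.induction_on with
  | zero => simp
  | succ n ih =>
      have h := hx (k + n * (q : ℤ))
      rw [show k + ((n : ℤ) + 1) * (q : ℤ) = (k + n * (q : ℤ)) + (q : ℤ) by ring, h, ih]
      push_cast; ring
  | pred n ih =>
      have h := hx (k + (-(n : ℤ) - 1) * (q : ℤ))
      rw [show k + (-(n : ℤ)) * (q : ℤ) = (k + (-(n : ℤ) - 1) * (q : ℤ)) + (q : ℤ) by ring] at ih
      rw [h] at ih
      have : x (k + (-(n : ℤ) - 1) * (q : ℤ)) = x k + ((-(n : ℤ)) * p : ℤ) - p := by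
        linarith [ih]
      rw [this]; push_cast; ring

/-- Corollary 2.1 (comparability part): any configuration strictly between
consecutive-among-translates configurations x ≺ x' is comparable with every
translate of x and of x'. -/
theorem comparable_with_all_translates
    (p : ℤ) (q : ℕ) (hq : 0 < q) (hpq : IsCoprime p (q : ℤ))
    (x x' : ℤ → ℝ) (hx : IsConfig p q x) (hx' : IsConfig p q x')
    (hlt : ConfLt x x')
    (hcons : ∀ i j : ℤ, (¬ ∃ m : ℤ, i = m * (q : ℤ) ∧ j = -(m * p)) →
      (ConfLe (tau i j x') x ∨ ConfLe x' (tau i j x)))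
    (z : ℤ → ℝ) (hz : IsConfig p q z)
    (hxz : ConfLt x z) (hzx' : ConfLt z x') :
    ∀ i j : ℤ,
      (ConfLe (tau i j x) z ∨ ConfLe z (tau i j x)) ∧
      (ConfLe (tau i j x') z ∨ ConfLe z (tau i j x')) := by
  intro i j
  by_cases h : ∃ m : ℤ, i = m * (q : ℤ) ∧ j = -(m * p)
  · obtain ⟨m, hi, hj⟩ := h
    have hfix : ∀ y : ℤ → ℝ, IsConfig p q y → ∀ k, tau i j y k = y k := by
      intro y hy k
      simp only [tau, hi, hj, config_shift hy m k]
      push_cast; ring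
    constructor
    · left; intro k; rw [hfix x hx k]; exact (hxz k).le
    · right; intro k; rw [hfix x' hx' k]; exact (hzx' k).le
  · rcases hcons i j h with hc | hc
    · have hxx' : ∀ k, tau i j x k ≤ tau i j x' k := by
        intro k; exact add_le_add_left (hlt (k + i)).le _
      constructor
      · left; intro k; exact le_trans (hxx' k) (le_trans (hc k) (hxz k).le)
      · left; intro k; exact le_trans (hc k) (hxz k).le
    · have hxx' : ∀ k, tau i j x k ≤ tau i j x' k := by
        intro k; exact add_le_add_left (hlt (k + i)).le _
      constructor
      · right; intro k; exact le_trans (hzx' k).le (hc k)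
      · right; intro k; exact le_trans (le_trans (hzx' k).le (hc k)) (hxx' k)
end
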